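/- Let μ, μ' be positive reals with μ ≠ μ', and let F, G : (0,∞) → ℝ satisfy F'' + ((μ²+1/4)/x² + κ/x − 1/4)F = 0 and G'' + ((μ'²+1/4)/x² + κ/x − 1/4)G = 0, with F, G, F', G' all tending to 0 as x → ∞, and suppose ∫_0^∞ F(x)G(x)/x² dx converges and the boundary Wronskian F(ξ)G'(ξ) − G(ξ)F'(ξ) has a limit L as ξ → 0+. Then ∫_0^∞ F(x)G(x)/x² dx = −L/(μ² − μ'²). -/

import Mathlib

/-!
The Wronskian `W = F G' - G F'` satisfies `W' = (μ² - μ'²) F G / x²`: the `κ / x`, `1 / 4` and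
`1 / (4 x²)` terms of the two equations cancel. Since `W` vanishes at infinity, integrating over
`(ξ, ∞)` gives `(μ² - μ'²) ∫_ξ^∞ F G / x² = -W ξ`, and letting `ξ → 0⁺` identifies `L`.
-/

open Real Set Filter MeasureTheory Topology

theorem hasDerivAt_wronskian {F F' G G' : ℝ → ℝ} {x F'' G'' : ℝ}
    (hF : HasDerivAt F (F' x) x) (hF' : HasDerivAt F' F'' x)
    (hG : HasDerivAt G (G' x) x) (hG' : HasDerivAt G' G'' x) :
    HasDerivAt (fun y => F y * G' y - G y * F' y) (F x * G'' - G x * F'') x :=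
  ((hF.mul hG').sub (hG.mul hF')).congr_deriv (by ring)

section TailIntegral

variable {E : Type*} [NormedAddCommGroup E] [NormedSpace ℝ E]

theorem tendsto_setIntegral_Ioi_nhdsGT {f : ℝ → E} {b : ℝ} (hf : IntegrableOn f (Ioi b)) :
    Tendsto (fun a => ∫ x in Ioi a, f x) (𝓝[>] b) (𝓝 (∫ x in Ioi b, f x)) := by
  simp only [← integral_indicator measurableSet_Ioi]
  have hf' : Integrable ((Ioi b).indicator f) := (integrable_indicator_iff measurableSet_Ioi).2 hf
  refine tendsto_integral_filter_of_dominated_convergence (fun x => ‖(Ioi b).indicator f x‖)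
    ?_ ?_ hf'.norm (Eventually.of_forall fun x => ?_)
  · filter_upwards [self_mem_nhdsWithin] with a (ha : b < a)
    exact ((integrable_indicator_iff measurableSet_Ioi).2
      (hf.mono_set (Ioi_subset_Ioi ha.le))).aestronglyMeasurable
  · filter_upwards [self_mem_nhdsWithin] with a (ha : b < a)
    refine Eventually.of_forall fun x => ?_
    by_cases hx : a < x
    · simp [hx, ha.trans hx]
    · simp [hx]
  · rcases lt_or_ge b x with hx | hx
    · refine tendsto_const_nhds.congr' ?_
      filter_upwards [Ioo_mem_nhdsGT hx] with a ha
      simp [hx, ha.2]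
    · refine tendsto_const_nhds.congr' ?_
      filter_upwards [self_mem_nhdsWithin] with a (ha : b < a)
      simp [hx.not_gt, (hx.trans_lt ha).not_gt]

theorem tendsto_nhdsGT_neg_integral_Ioi_of_hasDerivAt [CompleteSpace E] {W f : ℝ → E} {b : ℝ}
    (hW : ∀ x ∈ Ioi b, HasDerivAt W (f x) x) (hf : IntegrableOn f (Ioi b))
    (hW_top : Tendsto W atTop (𝓝 0)) :
    Tendsto W (𝓝[>] b) (𝓝 (-∫ x in Ioi b, f x)) := by
  refine (tendsto_setIntegral_Ioi_nhdsGT hf).neg.congr' ?_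
  filter_upwards [self_mem_nhdsWithin] with a (ha : b < a)
  rw [integral_Ioi_of_hasDerivAt_of_tendsto (hW a ha).continuousAt.continuousWithinAt
    (fun x hx => hW x (ha.trans hx)) (hf.mono_set (Ioi_subset_Ioi ha.le)) hW_top]
  simp

end TailIntegral

theorem green_identity_on_halfline
    (μ μ' κ L : ℝ) (hμ : 0 < μ) (hμ' : 0 < μ') (hne : μ ≠ μ')
    (F F' F'' G G' G'' : ℝ → ℝ)
    (hF : ∀ x ∈ Ioi (0 : ℝ), HasDerivAt F (F' x) x)
    (hF' : ∀ x ∈ Ioi (0 : ℝ), HasDerivAt F' (F'' x) x)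
    (hG : ∀ x ∈ Ioi (0 : ℝ), HasDerivAt G (G' x) x)
    (hG' : ∀ x ∈ Ioi (0 : ℝ), HasDerivAt G' (G'' x) x)
    (hFeq : ∀ x ∈ Ioi (0 : ℝ),
      F'' x + ((μ ^ 2 + 1 / 4) / x ^ 2 + κ / x - 1 / 4) * F x = 0)
    (hGeq : ∀ x ∈ Ioi (0 : ℝ),
      G'' x + ((μ' ^ 2 + 1 / 4) / x ^ 2 + κ / x - 1 / 4) * G x = 0)
    (hF0 : Tendsto F atTop (nhds 0)) (hF'0 : Tendsto F' atTop (nhds 0))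
    (hG0 : Tendsto G atTop (nhds 0)) (hG'0 : Tendsto G' atTop (nhds 0))
    (hint : IntegrableOn (fun x => F x * G x / x ^ 2) (Ioi 0))
    (hL : Tendsto (fun ξ => F ξ * G' ξ - G ξ * F' ξ)
      (nhdsWithin 0 (Ioi 0)) (nhds L)) :
    ∫ x in Ioi (0 : ℝ), F x * G x / x ^ 2 = -L / (μ ^ 2 - μ' ^ 2) := by
  have hc : μ ^ 2 - μ' ^ 2 ≠ 0 := by
    rw [sub_ne_zero, Ne, sq_eq_sq₀ hμ.le hμ'.le]
    exact hne
  have hW : ∀ x ∈ Ioi (0 : ℝ), HasDerivAt (fun y => F y * G' y - G y * F' y)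
      ((μ ^ 2 - μ' ^ 2) * (F x * G x / x ^ 2)) x := fun x hx => by
    convert hasDerivAt_wronskian (hF x hx) (hF' x hx) (hG x hx) (hG' x hx) using 1
    linear_combination G x * hFeq x hx - F x * hGeq x hx
  have hW_top : Tendsto (fun y => F y * G' y - G y * F' y) atTop (𝓝 0) := by
    simpa using (hF0.mul hG'0).sub (hG0.mul hF'0)
  have hL' := tendsto_nhdsGT_neg_integral_Ioi_of_hasDerivAt hW (hint.const_mul _) hW_top
  rw [tendsto_nhds_unique hL hL', integral_const_mul]
  field_simp
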